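/- In the braid group B_3, the word σ1 σ2⁻¹ σ2⁻¹ σ1 σ1 σ2 σ2 σ2 σ1 σ1 σ2 σ2 (a braid representative of the knot 12n830) equals the product of the positive bands of its band decomposition with band centers {1, 4, 5, 6, 7, 8, 9, 10}, namely σ1 · (σ2⁻² σ1 σ2²) · (σ2⁻² σ1 σ2²) · (σ2⁻² σ2 σ2²) · (σ2⁻² σ2 σ2²) · (σ2⁻² σ2 σ2²) · (σ2⁻² σ1 σ2²) · (σ2⁻² σ1 σ2²); in particular, this braid is quasipositive. -/

import Mathlib

/-!
Bands of a band decomposition telescope: the product of the bands `α_p x_p α_p⁻¹` over the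
centers, followed by the product of all non-center letters, is the word itself. For `12n830`
the non-center letters `σ₂⁻¹ σ₂⁻¹` (positions 2, 3) and `σ₂ σ₂` (positions 11, 12) cancel, so
the word equals its band product; every center carries a positive letter, so every band is
positive.
-/

/-- The Artin relations for the braid group with `m` generators
`σ_1, …, σ_m` (indexed by `Fin m`), i.e. the braid group `B_{m+1}`:
`σ_i σ_j = σ_j σ_i` for `|i - j| ≥ 2`, and
`σ_i σ_{i+1} σ_i = σ_{i+1} σ_i σ_{i+1}`. -/
def braidRels (m : ℕ) : Set (FreeGroup (Fin m)) :=
  { r | (∃ i j : Fin m, (i : ℕ) + 2 ≤ (j : ℕ) ∧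
          r = FreeGroup.of i * FreeGroup.of j * (FreeGroup.of i)⁻¹ * (FreeGroup.of j)⁻¹) ∨
        (∃ i j : Fin m, (i : ℕ) + 1 = (j : ℕ) ∧
          r = FreeGroup.of i * FreeGroup.of j * FreeGroup.of i *
              (FreeGroup.of j)⁻¹ * (FreeGroup.of i)⁻¹ * (FreeGroup.of j)⁻¹) }

/-- The braid group `B_{m+1}`, presented with `m` Artin generators.
Here index `i : Fin m` corresponds to the Artin generator `σ_{i+1}`. -/
abbrev BraidGrp (m : ℕ) := PresentedGroup (braidRels m)

/-- The Artin generator `σ_{i+1}` of the braid group `B_{m+1}`. -/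
def σ {m : ℕ} (i : Fin m) : BraidGrp m := PresentedGroup.of i

/-- A letter of a braid word: a generator index together with a sign
(`true` = the positive generator, `false` = its inverse). -/
abbrev Letter (m : ℕ) := Fin m × Bool

/-- The group element represented by a letter. -/
def letterEl {m : ℕ} (x : Letter m) : BraidGrp m :=
  if x.2 then σ x.1 else (σ x.1)⁻¹

/-- The group element represented by a braid word. -/
def wordProd {m : ℕ} (w : List (Letter m)) : BraidGrp m :=
  (w.map letterEl).prod

/-- The band of the band decomposition of the word `w` with band centers `S`
(1-based positions) at center `p`: namely `α_p * x_p * α_p⁻¹`, where `x_p` is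
the letter of `w` at position `p` and `α_p` is the product, in increasing
order of position, of the letters of `w` at positions `q < p` with `q ∉ S`. -/
def band {m : ℕ} (w : List (Letter m)) (S : List ℕ) (p : ℕ) : BraidGrp m :=
  let α : BraidGrp m :=
    wordProd (((w.zipIdx.map Prod.swap).filter fun qx => decide (qx.1 + 1 < p ∧ qx.1 + 1 ∉ S)).map Prod.snd)
  match w[p - 1]? with
  | some x => α * letterEl x * α⁻¹
  | none => 1

/-- The product, in increasing order of band center, of the bands of the
band decomposition of the word `w` with band centers `S`. -/
def bandProd {m : ℕ} (w : List (Letter m)) (S : List ℕ) : BraidGrp m :=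
  (S.map (band w S)).prod

/-- A positive band in the braid group: a conjugate `α σ_j α⁻¹` of a generator. -/
def IsPositiveBand {m : ℕ} (x : BraidGrp m) : Prop :=
  ∃ (α : BraidGrp m) (j : Fin m), x = α * σ j * α⁻¹

/-- A braid is quasipositive if it is a product of positive bands. -/
def IsQuasipositive {m : ℕ} (x : BraidGrp m) : Prop :=
  ∃ l : List (BraidGrp m), (∀ b ∈ l, IsPositiveBand b) ∧ x = l.prod

/-- A negative band in the braid group: a conjugate `α σ_j⁻¹ α⁻¹` of the
inverse of a generator. -/
def IsNegativeBand {m : ℕ} (x : BraidGrp m) : Prop :=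
  ∃ (α : BraidGrp m) (j : Fin m), x = α * (σ j)⁻¹ * α⁻¹

/-- A braid is quasinegative if it is a product of negative bands. -/
def IsQuasinegative {m : ℕ} (x : BraidGrp m) : Prop :=
  ∃ l : List (BraidGrp m), (∀ b ∈ l, IsNegativeBand b) ∧ x = l.prod

/-- The braid word for the knot `12n830` (letter `(i, true)` is `σ_(i+1)`,
`(i, false)` is `σ_(i+1)⁻¹`). -/
def theWord : List (Letter 2) :=
  [(0, true), (1, false), (1, false), (0, true), (0, true), (1, true), (1, true), (1, true), (0, true), (0, true), (1, true), (1, true)]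

/-- The band centers. -/
def theCenters : List ℕ := [1, 4, 5, 6, 7, 8, 9, 10]

section BandDecomposition

variable {m : ℕ}

theorem List.filter_le_eq_filter_lt_append {S : List ℕ} (hS : S.Pairwise (· < ·)) {a : ℕ}
    (ha : a ∈ S) : S.filter (· ≤ a) = S.filter (· < a) ++ [a] := by
  induction S with
  | nil => simp at ha
  | cons b T ih =>
    rw [List.pairwise_cons] at hS
    rcases List.mem_cons.1 ha with rfl | haT
    · have hle : T.filter (· ≤ a) = [] := List.filter_eq_nil_iff.2 fun c hc => by
        simpa using hS.1 c hc
      have hlt : T.filter (· < a) = [] := List.filter_eq_nil_iff.2 fun c hc => by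
        simpa using (hS.1 c hc).le
      simp [hle, hlt]
    · have hba : b < a := hS.1 a haT
      simp [hba, hba.le, ih hS.2 haT]

theorem wordProd_append (v w : List (Letter m)) :
    wordProd (v ++ w) = wordProd v * wordProd w := by
  simp [wordProd]

/-- The word `α_p` of the letters of `w` at non-center positions `q < p`. -/
def nonCenterPrefix (w : List (Letter m)) (S : List ℕ) (p : ℕ) : List (Letter m) :=
  ((w.zipIdx.map Prod.swap).filter fun qx => decide (qx.1 + 1 < p ∧ qx.1 + 1 ∉ S)).map Prod.snd

theorem nonCenterPrefix_append_singleton (w : List (Letter m)) (x : Letter m) (S : List ℕ)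
    (p : ℕ) : nonCenterPrefix (w ++ [x]) S p =
      nonCenterPrefix w S p ++ if w.length + 1 < p ∧ w.length + 1 ∉ S then [x] else [] := by
  by_cases h : w.length + 1 < p ∧ w.length + 1 ∉ S <;>
    simp [nonCenterPrefix, List.zipIdx_append, List.filter_append, h]

theorem nonCenterPrefix_of_length_lt {w : List (Letter m)} (S : List ℕ) {p : ℕ}
    (hp : w.length < p) : nonCenterPrefix w S p = nonCenterPrefix w S (w.length + 1) := by
  induction w using List.reverseRecOn generalizing p with
  | nil => simp [nonCenterPrefix]
  | append_singleton w x ih =>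
    simp only [List.length_append, List.length_singleton] at hp ⊢
    rw [nonCenterPrefix_append_singleton, nonCenterPrefix_append_singleton,
      ih (p := p) (by omega), ih (p := w.length + 1 + 1) (by omega)]
    simp [hp]

theorem band_of_getElem? {w : List (Letter m)} {S : List ℕ} {p : ℕ} {x : Letter m}
    (hx : w[p - 1]? = some x) :
    band w S p = wordProd (nonCenterPrefix w S p) * letterEl x *
      (wordProd (nonCenterPrefix w S p))⁻¹ := by
  simp only [band, nonCenterPrefix, hx]

theorem band_append_singleton {w : List (Letter m)} (x : Letter m) (S : List ℕ) {p : ℕ}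
    (hp₀ : p ≠ 0) (hp : p ≤ w.length) : band (w ++ [x]) S p = band w S p := by
  obtain ⟨y, hy⟩ : ∃ y, w[p - 1]? = some y := ⟨w[p - 1], List.getElem?_eq_getElem (by omega)⟩
  have hy' : (w ++ [x])[p - 1]? = some y := by rw [List.getElem?_append_left (by omega), hy]
  rw [band_of_getElem? hy, band_of_getElem? hy', nonCenterPrefix_append_singleton,
    if_neg (by omega), List.append_nil]

theorem isPositiveBand_band {w : List (Letter m)} {S : List ℕ} {p : ℕ} {j : Fin m}
    (hp : w[p - 1]? = some (j, true)) : IsPositiveBand (band w S p) :=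
  ⟨_, j, by rw [band_of_getElem? hp]; rfl⟩

theorem isQuasipositive_bandProd {w : List (Letter m)} {S : List ℕ}
    (hS : ∀ p ∈ S, ∃ j, w[p - 1]? = some (j, true)) : IsQuasipositive (bandProd w S) :=
  ⟨S.map (band w S), by
    simp only [List.mem_map, forall_exists_index, and_imp, forall_apply_eq_imp_iff₂]
    exact fun p hp => (hS p hp).elim fun _ hj => isPositiveBand_band hj, rfl⟩

/-- Telescoping: consecutive bands `α_p x_p α_p⁻¹ α_q x_q α_q⁻¹` meet in `α_p⁻¹ α_q`, the
non-center letters between `p` and `q`. -/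
theorem bandProd_filter_mul_wordProd_nonCenterPrefix (w : List (Letter m)) {S : List ℕ}
    (hS : S.Pairwise (· < ·)) (hS₀ : 0 ∉ S) :
    ((S.filter (· ≤ w.length)).map (band w S)).prod *
      wordProd (nonCenterPrefix w S (w.length + 1)) = wordProd w := by
  induction w using List.reverseRecOn with
  | nil =>
    have hfilter : S.filter (· ≤ 0) = [] := List.filter_eq_nil_iff.2 fun p hp => by
      simpa using ne_of_mem_of_not_mem hp hS₀
    rw [List.length_nil, hfilter]
    simp [nonCenterPrefix, wordProd]
  | append_singleton w x ih =>
    have hbands : ((S.filter (· ≤ w.length)).map (band (w ++ [x]) S)) =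
        (S.filter (· ≤ w.length)).map (band w S) := List.map_congr_left fun p hp => by
      rw [List.mem_filter, decide_eq_true_iff] at hp
      exact band_append_singleton x S (ne_of_mem_of_not_mem hp.1 hS₀) hp.2
    have hlt : S.filter (· < w.length + 1) = S.filter (· ≤ w.length) := by
      simp only [Nat.lt_succ_iff]
    simp only [List.length_append, List.length_singleton, nonCenterPrefix_append_singleton,
      lt_add_iff_pos_right, zero_lt_one, true_and, wordProd_append, ← ih]
    by_cases hn : w.length + 1 ∈ S
    · have hx : (w ++ [x])[w.length + 1 - 1]? = some x := by simp
      rw [List.filter_le_eq_filter_lt_append hS hn, hlt, List.map_append, hbands]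
      simp [hn, band_of_getElem? hx, nonCenterPrefix_append_singleton, mul_assoc, wordProd,
        nonCenterPrefix_of_length_lt S (show w.length < w.length + 1 + 1 by omega)]
    · have hle : S.filter (· ≤ w.length + 1) = S.filter (· ≤ w.length) :=
        List.filter_congr fun p hp => by
          have : p ≠ w.length + 1 := ne_of_mem_of_not_mem hp hn
          simp only [decide_eq_decide]
          omega
      rw [hle, hbands]
      simp [hn, mul_assoc,
        nonCenterPrefix_of_length_lt S (show w.length < w.length + 1 + 1 by omega)]

theorem wordProd_eq_bandProd {w : List (Letter m)} {S : List ℕ} (hS : S.Pairwise (· < ·))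
    (hS₀ : 0 ∉ S) (hSw : ∀ p ∈ S, p ≤ w.length)
    (hα : wordProd (nonCenterPrefix w S (w.length + 1)) = 1) : wordProd w = bandProd w S := by
  have h := bandProd_filter_mul_wordProd_nonCenterPrefix w hS hS₀
  rwa [List.filter_eq_self.2 (by simpa using hSw), hα, mul_one, eq_comm] at h

end BandDecomposition

/-- The braid representative of `12n830` equals the product of the bands of its
band decomposition with the given band centers; in particular it is quasipositive. -/
theorem knot_12n830_quasipositive :
    wordProd theWord = bandProd theWord theCenters ∧
      bandProd theWord theCenters =
        σ 0 * (((σ 1) ^ 2)⁻¹ * σ 0 * (σ 1) ^ 2) * (((σ 1) ^ 2)⁻¹ * σ 0 * (σ 1) ^ 2) * (((σ 1) ^ 2)⁻¹ * σ 1 * (σ 1) ^ 2) * (((σ 1) ^ 2)⁻¹ * σ 1 * (σ 1) ^ 2) * (((σ 1) ^ 2)⁻¹ * σ 1 * (σ 1) ^ 2) * (((σ 1) ^ 2)⁻¹ * σ 0 * (σ 1) ^ 2) * (((σ 1) ^ 2)⁻¹ * σ 0 * (σ 1) ^ 2) ∧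
      IsQuasipositive (wordProd theWord) := by
  have hα : nonCenterPrefix theWord theCenters (theWord.length + 1) =
      [(1, false), (1, false), (1, true), (1, true)] := by
    decide
  have hdecomp : wordProd theWord = bandProd theWord theCenters :=
    wordProd_eq_bandProd (by decide) (by decide) (by decide) (by simp [hα, wordProd, letterEl])
  refine ⟨hdecomp, ?_, hdecomp ▸ isQuasipositive_bandProd (by decide)⟩
  simp [bandProd, theCenters, band, theWord, List.zipIdx, wordProd, letterEl, pow_two, mul_assoc]
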